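/- arXiv:2505.11430 — 3 statements merged into one kernel-verified Lean document; each statement's English description precedes it below -/
import Mathlib

section
/- Let n ≥ 1 and d ≥ 1 be natural numbers, let T be a natural number, and let a, b : ℕ → ℕ be nonincreasing sequences with a 0 ≤ n and b 0 ≤ n. Suppose that for every t < T at least one of the following holds: (i) a (t+1) + d ≤ a t; (ii) b t ≥ 1 and 2·b (t+1) ≤ b t; (iii) a t ≥ 1 and 4·a (t+1) ≤ 3·a t. Then, as real numbers, T ≤ n/d + log₂ n + log_{4/3} n + 2. -/
/-!
The potential `Φ t = a t / d + log₂ (b t) + log_{4/3} (a t)` drops by at least one in every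
attempt: the first term in case (i), the second in case (ii), the third in case (iii), while
the other two terms do not increase since `a` and `b` are nonincreasing. Counting the
logarithm of `0` as `-1`, the potential starts at most at `n/d + log₂ n + log_{4/3} n` and never
goes below `-2`, so there are at most that many plus two attempts.
-/

open Real

/-- `Real.logb c 0 = 0`, so the value at `0` is moved down to `-1`: then a drop from `1` to `0`
also lowers the potential by one. -/
noncomputable def logPot (c : ℝ) (m : ℕ) : ℝ := if m = 0 then -1 else logb c m

theorem neg_one_le_logPot {c : ℝ} (hc : 1 < c) (m : ℕ) : -1 ≤ logPot c m := by
  unfold logPot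
  split_ifs with hm
  · exact le_rfl
  · have : 0 ≤ logb c m := logb_nonneg hc (by exact_mod_cast Nat.one_le_iff_ne_zero.mpr hm)
    linarith

theorem logPot_le_logb (c : ℝ) (m : ℕ) : logPot c m ≤ logb c m := by
  unfold logPot
  split_ifs with hm
  · simp [hm]
  · exact le_rfl

theorem logPot_mono {c : ℝ} (hc : 1 < c) : Monotone (logPot c) := by
  intro x y hxy
  rcases Nat.eq_zero_or_pos x with rfl | hx
  · simpa [logPot] using neg_one_le_logPot hc y
  · simp only [logPot, hx.ne', (hx.trans_le hxy).ne', if_false]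
    exact logb_le_logb_of_le hc (by exact_mod_cast hx) (by exact_mod_cast hxy)

theorem logPot_add_one_le {c : ℝ} (hc : 1 < c) {x y : ℕ} (hy : 1 ≤ y) (h : c * x ≤ y) :
    logPot c x + 1 ≤ logPot c y := by
  have hy0 : y ≠ 0 := by omega
  rcases Nat.eq_zero_or_pos x with rfl | hx
  · simpa [logPot, hy0] using logb_nonneg hc (by exact_mod_cast hy)
  · simp only [logPot, hx.ne', hy0, if_false]
    calc logb c x + 1 = logb c (c * x) := by
          rw [logb_mul (by positivity) (by positivity), logb_self_eq_one hc, add_comm]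
      _ ≤ logb c y := logb_le_logb_of_le hc (by positivity) h

theorem add_le_of_forall_succ_add_one_le {Φ : ℕ → ℝ} {T : ℕ}
    (h : ∀ t < T, Φ (t + 1) + 1 ≤ Φ t) : Φ T + T ≤ Φ 0 := by
  induction T with
  | zero => simp
  | succ T ih =>
    have hT := h T T.lt_succ_self
    have := ih fun t ht => h t (ht.trans T.lt_succ_self)
    push_cast
    linarith

noncomputable def attemptPotential (d : ℕ) (a b : ℕ → ℕ) (t : ℕ) : ℝ :=
  a t / d + logPot 2 (b t) + logPot (4 / 3) (a t)

theorem neg_two_le_attemptPotential (d : ℕ) (a b : ℕ → ℕ) (t : ℕ) :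
    -2 ≤ attemptPotential d a b t := by
  have : (0 : ℝ) ≤ a t / d := by positivity
  unfold attemptPotential
  linarith [neg_one_le_logPot one_lt_two (b t),
    neg_one_le_logPot (by norm_num : (1 : ℝ) < 4 / 3) (a t)]

theorem attemptPotential_zero_le {n d : ℕ} {a b : ℕ → ℕ} (ha0 : a 0 ≤ n) (hb0 : b 0 ≤ n) :
    attemptPotential d a b 0 ≤ n / d + logb 2 n + logb (4 / 3) n := by
  have hdiv : (a 0 : ℝ) / d ≤ n / d := by gcongr
  have hlog2 : logPot 2 (b 0) ≤ logb 2 n :=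
    (logPot_mono one_lt_two hb0).trans (logPot_le_logb 2 n)
  have hlog43 : logPot (4 / 3) (a 0) ≤ logb (4 / 3) n :=
    (logPot_mono (by norm_num) ha0).trans (logPot_le_logb _ n)
  unfold attemptPotential
  linarith

theorem attemptPotential_succ_add_one_le {d : ℕ} (hd : 1 ≤ d) {a b : ℕ → ℕ} {t : ℕ}
    (hat : a (t + 1) ≤ a t) (hbt : b (t + 1) ≤ b t)
    (h : a (t + 1) + d ≤ a t ∨ (1 ≤ b t ∧ 2 * b (t + 1) ≤ b t) ∨
      (1 ≤ a t ∧ 4 * a (t + 1) ≤ 3 * a t)) :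
    attemptPotential d a b (t + 1) + 1 ≤ attemptPotential d a b t := by
  have hdpos : (0 : ℝ) < d := by exact_mod_cast hd
  have hdiv : (a (t + 1) : ℝ) / d ≤ a t / d := by gcongr
  have hlog2 := logPot_mono one_lt_two hbt
  have hlog43 := logPot_mono (by norm_num : (1 : ℝ) < 4 / 3) hat
  unfold attemptPotential
  rcases h with h | ⟨hb1, hhalf⟩ | ⟨ha1, hshrink⟩
  · have : (a (t + 1) : ℝ) / d + 1 ≤ a t / d := by
      rw [div_add_one hdpos.ne', div_le_div_iff_of_pos_right hdpos]
      exact_mod_cast h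
    linarith
  · have := logPot_add_one_le one_lt_two hb1 (by exact_mod_cast hhalf)
    linarith
  · have hshrink' : (4 : ℝ) * a (t + 1) ≤ 3 * a t := by exact_mod_cast hshrink
    have := logPot_add_one_le (by norm_num : (1 : ℝ) < 4 / 3) ha1 (x := a (t + 1)) (by linarith)
    linarith

theorem attempts_bound_general (n d T : ℕ) (hd : 1 ≤ d)
    (a b : ℕ → ℕ) (ha : Antitone a) (hb : Antitone b)
    (ha0 : a 0 ≤ n) (hb0 : b 0 ≤ n)
    (hstep : ∀ t < T,
      (a (t + 1) + d ≤ a t) ∨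
      (1 ≤ b t ∧ 2 * b (t + 1) ≤ b t) ∨
      (1 ≤ a t ∧ 4 * a (t + 1) ≤ 3 * a t)) :
    (T : ℝ) ≤ (n : ℝ) / d + Real.logb 2 n + Real.logb (4 / 3) n + 2 := by
  have hdescent := add_le_of_forall_succ_add_one_le fun t ht =>
    attemptPotential_succ_add_one_le hd (ha t.le_succ) (hb t.le_succ) (hstep t ht)
  linarith [neg_two_le_attemptPotential d a b T, attemptPotential_zero_le (d := d) ha0 hb0]

/-- Abstract accounting lemma bounding the number of attempts: if each attempt
either decreases `a` by at least `d`, or halves `b` (when `b ≥ 1`), or decreases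
`a` by a constant factor (when `a ≥ 1`), then the number of attempts is at most
`n/d + log₂ n + log_{4/3} n + 2`. -/
theorem attempts_bound (n d T : ℕ) (hn : 1 ≤ n) (hd : 1 ≤ d)
    (a b : ℕ → ℕ) (ha : Antitone a) (hb : Antitone b)
    (ha0 : a 0 ≤ n) (hb0 : b 0 ≤ n)
    (hstep : ∀ t < T,
      (a (t + 1) + d ≤ a t) ∨
      (1 ≤ b t ∧ 2 * b (t + 1) ≤ b t) ∨
      (1 ≤ a t ∧ 4 * a (t + 1) ≤ 3 * a t)) :
    (T : ℝ) ≤ (n : ℝ) / d + Real.logb 2 n + Real.logb (4 / 3) n + 2 :=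
  attempts_bound_general n d T hd a b ha hb ha0 hb0 hstep
end

section
/- Let R be a commutative semiring, let m and r be natural numbers, and let α, β : Fin r → Matrix (Fin m) (Fin m) R and γ : Fin m → Fin m → Fin r → R satisfy the matrix-multiplication-tensor identity: for all i, j, a, b, c, d : Fin m, Σ_{k : Fin r} γ i j k * (α k) a b * (β k) c d = (if a = i ∧ b = c ∧ d = j then 1 else 0). Then for every associative R-algebra S (not necessarily commutative) and all matrices X, Y : Matrix (Fin m) (Fin m) S, one has for all i, j : Fin m: (X*Y) i j = Σ_{k : Fin r} γ i j k • (X̂ k * Ŷ k), where X̂ k := Σ_{a, b : Fin m} (α k) a b • X a b ∈ S, Ŷ k := Σ_{c, d : Fin m} (β k) c d • Y c d ∈ S, and • denotes the R-scalar action on S. -/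
/-!
Expanding the right-hand side by bilinearity, the coefficient of `X a b * Y c d` is
`∑ k, γ i j k * α k a b * β k c d`, a scalar in `R`. The factors `X a b` and `Y c d` keep
their order throughout, and only scalars of `R` are moved past them, so the tensor identity
collapses the sum to `∑ b, X i b * Y b j` without any commutativity in `S`.
-/

open Finset

theorem sum_smul_mul_sum_smul_eq_sum_sum {R S ρ ι κ : Type*} [CommSemiring R] [Semiring S]
    [Algebra R S] [Fintype ρ] [Fintype ι] [Fintype κ] (w : ρ → R) (u : ρ → ι → R)
    (v : ρ → κ → R) (x : ι → S) (y : κ → S) :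
    ∑ k, w k • ((∑ a, u k a • x a) * (∑ c, v k c • y c)) =
      ∑ a, ∑ c, (∑ k, w k * u k a * v k c) • (x a * y c) := by
  simp only [sum_mul_sum, smul_mul_smul_comm, smul_sum, smul_smul, sum_smul, mul_assoc]
  rw [sum_comm]
  exact sum_congr rfl fun _ _ => sum_comm

/-- A bilinear (fast) matrix multiplication tensor over a commutative semiring `R`
remains correct when the matrix entries lie in an arbitrary (possibly
noncommutative) `R`-algebra `S`. -/
theorem tensor_correct_over_algebra (R : Type*) [CommSemiring R]
    (m r : ℕ)
    (α β : Fin r → Matrix (Fin m) (Fin m) R)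
    (γ : Fin m → Fin m → Fin r → R)
    (htensor : ∀ i j a b c d : Fin m,
      ∑ k : Fin r, γ i j k * (α k) a b * (β k) c d =
        if a = i ∧ b = c ∧ d = j then 1 else 0)
    (S : Type*) [Semiring S] [Algebra R S]
    (X Y : Matrix (Fin m) (Fin m) S) (i j : Fin m) :
    (X * Y) i j =
      ∑ k : Fin r, γ i j k •
        ((∑ a : Fin m, ∑ b : Fin m, (α k) a b • X a b) *
         (∑ c : Fin m, ∑ d : Fin m, (β k) c d • Y c d)) := by
  simp only [← Fintype.sum_prod_type']
  rw [sum_smul_mul_sum_smul_eq_sum_sum]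
  simp [htensor, Fintype.sum_prod_type, ite_and, Matrix.mul_apply]
end

section
/- Let R be a commutative semiring, let m, r, p be natural numbers, and let α, β : Fin r → Matrix (Fin m) (Fin m) R and γ : Fin m → Fin m → Fin r → R satisfy the matrix-multiplication-tensor identity: for all i, j, a, b, c, d : Fin m, Σ_{k : Fin r} γ i j k * (α k) a b * (β k) c d = (if a = i ∧ b = c ∧ d = j then 1 else 0). Let A, B be matrices indexed by (Fin m × Fin p) × (Fin m × Fin p) with entries in R, with blocks A^i_j : Matrix (Fin p) (Fin p) R defined by A^i_j a b = A (i,a) (j,b) (and similarly for B and A*B). Define Â k := Σ_{a, b : Fin m} (α k) a b • A^a_b and B̂ k := Σ_{c, d : Fin m} (β k) c d • B^c_d, both p×p matrices over R. Then for all i, j : Fin m, (A*B)^i_j = Σ_{k : Fin r} γ i j k • (Â k * B̂ k). -/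
/-!
A bilinear algorithm for multiplying `m × m` matrices uses only the ring axioms of the entries
together with scalars commuting with products, so it is valid over any (noncommutative)
`R`-algebra. Applied to the algebra of `p × p` matrices, with the blocks of `A` and `B` as
entries, it computes the blocks of `A * B`, since block multiplication is ordinary matrix
multiplication at the level of blocks.
-/

/-- The `(i,j)`-block of a matrix indexed blockwise. -/
def blockOf {R : Type*} {m p : ℕ}
    (M : Matrix (Fin m × Fin p) (Fin m × Fin p) R) (i j : Fin m) :
    Matrix (Fin p) (Fin p) R :=
  Matrix.of fun a b => M (i, a) (j, b)

open Finset

theorem blockOf_mul {R : Type*} [NonUnitalNonAssocSemiring R] {m p : ℕ}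
    (A B : Matrix (Fin m × Fin p) (Fin m × Fin p) R) (i j : Fin m) :
    blockOf (A * B) i j = ∑ b, blockOf A i b * blockOf B b j := by
  ext x y
  simp [blockOf, Matrix.mul_apply, Matrix.sum_apply, Fintype.sum_prod_type]

theorem sum_smul_mul_smul_eq_sum_mul {R S ι κ : Type*} [CommSemiring R]
    [NonUnitalNonAssocSemiring S] [Module R S] [IsScalarTower R S S] [SMulCommClass R S S]
    [Fintype ι] [DecidableEq ι] [Fintype κ]
    (α β : κ → Matrix ι ι R) (γ : ι → ι → κ → R)
    (htensor : ∀ i j a b c d : ι,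
      ∑ k, γ i j k * α k a b * β k c d = if a = i ∧ b = c ∧ d = j then 1 else 0)
    (X Y : ι → ι → S) (i j : ι) :
    ∑ k, γ i j k • ((∑ a, ∑ b, α k a b • X a b) * (∑ c, ∑ d, β k c d • Y c d)) =
      ∑ b, X i b * Y b j := by
  calc _ = ∑ a, ∑ b, ∑ c, ∑ d, ∑ k, (γ i j k * α k a b * β k c d) • (X a b * Y c d) := by
        simp only [sum_mul]
        simp only [mul_sum, smul_mul_smul_comm, smul_sum, smul_smul, mul_assoc]
        rw [sum_comm]; refine sum_congr rfl fun a _ => ?_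
        rw [sum_comm]; refine sum_congr rfl fun b _ => ?_
        rw [sum_comm]; refine sum_congr rfl fun c _ => ?_
        rw [sum_comm]
    _ = ∑ a, ∑ b, ∑ c, ∑ d, (if a = i ∧ b = c ∧ d = j then (1 : R) else 0) • (X a b * Y c d) := by
        simp only [← sum_smul, htensor]
    _ = ∑ b, X i b * Y b j := by
        simp [ite_and, ite_smul]

/-- The block identity `C^i_j = Σ_k γ^{i,j}_k Â_k B̂_k` obtained by applying a
rank-`r` bilinear matrix multiplication tensor for `m × m` matrices to the
`m × m` grid of `p × p` blocks of an `n × n` matrix (`n = m·p`). -/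
theorem fast_block_mul (R : Type*) [CommSemiring R] (m r p : ℕ)
    (α β : Fin r → Matrix (Fin m) (Fin m) R)
    (γ : Fin m → Fin m → Fin r → R)
    (htensor : ∀ i j a b c d : Fin m,
      ∑ k : Fin r, γ i j k * (α k) a b * (β k) c d =
        if a = i ∧ b = c ∧ d = j then 1 else 0)
    (A B : Matrix (Fin m × Fin p) (Fin m × Fin p) R) (i j : Fin m) :
    blockOf (A * B) i j =
      ∑ k : Fin r, γ i j k •
        ((∑ a : Fin m, ∑ b : Fin m, (α k) a b • blockOf A a b) *
         (∑ c : Fin m, ∑ d : Fin m, (β k) c d • blockOf B c d)) := by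
  rw [blockOf_mul, sum_smul_mul_smul_eq_sum_mul α β γ htensor]
end
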